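/- arXiv:1403.3765 — 3 statements merged into one kernel-verified Lean document; each statement's English description precedes it below -/
import Mathlib

section
/- The double series defining the Euler double zeta-function, ∑_{n₁≥1} ∑_{n₂≥1} n₁^{-s₁} (n₁+n₂)^{-s₂}, converges absolutely for every pair (s₁,s₂) ∈ ℂ² with Re s₁ + Re s₂ > 2 and Re s₂ > 1. -/
/-!
With `σᵢ = Re sᵢ`, splitting the exponent gives `(n₁ + n₂)^σ₂ ≥ n₁^(σ₂ - t) n₂^t` for `0 ≤ t ≤ σ₂`,
so the absolute value of the general term is at most `n₁^-(σ₁ + σ₂ - t) n₂^-t`. Choosing `1 < t < min σ₂ (σ₁ + σ₂ - 1)` makes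
this a product of two convergent `p`-series.
-/

open Complex

/-- The Euler double zeta-function `ζ₂(s₁, s₂) = ∑_{n₁ ≥ 1} ∑_{n₂ ≥ 1} n₁^{-s₁} (n₁+n₂)^{-s₂}`,
indexed by `(n : ℕ × ℕ)` with `n₁ = n.1 + 1` and `n₂ = n.2 + 1`. -/
noncomputable def eulerZeta2 (s₁ s₂ : ℂ) : ℂ :=
  ∑' n : ℕ × ℕ,
    1 / (((n.1 : ℂ) + 1) ^ s₁ * (((n.1 : ℂ) + 1) + ((n.2 : ℂ) + 1)) ^ s₂)

lemma rpow_add_sub_mul_rpow_le_rpow_mul_add_rpow {a c : ℝ} (σ₁ : ℝ) {σ₂ t : ℝ}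
    (ha : 0 < a) (hc : 0 ≤ c) (ht₀ : 0 ≤ t) (ht : t ≤ σ₂) :
    a ^ (σ₁ + σ₂ - t) * c ^ t ≤ a ^ σ₁ * (a + c) ^ σ₂ :=
  calc a ^ (σ₁ + σ₂ - t) * c ^ t = a ^ σ₁ * (a ^ (σ₂ - t) * c ^ t) := by
        rw [add_sub_assoc, Real.rpow_add ha, mul_assoc]
    _ ≤ a ^ σ₁ * ((a + c) ^ (σ₂ - t) * (a + c) ^ t) := by
        gcongr <;> linarith
    _ = a ^ σ₁ * (a + c) ^ σ₂ := by
        rw [← Real.rpow_add (by positivity), sub_add_cancel]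

lemma summable_nat_add_one_rpow_neg {p : ℝ} (hp : 1 < p) :
    Summable fun n : ℕ => ((n : ℝ) + 1) ^ (-p) := by
  simpa [Real.rpow_neg, abs_of_nonneg, add_nonneg] using
    (Real.summable_one_div_nat_add_rpow 1 p).mpr hp

lemma norm_one_div_cpow_mul_cpow {x y : ℝ} (hx : 0 < x) (hy : 0 < y) (s₁ s₂ : ℂ) :
    ‖1 / ((x : ℂ) ^ s₁ * (y : ℂ) ^ s₂)‖ = 1 / (x ^ s₁.re * y ^ s₂.re) := by
  rw [norm_div, norm_one, norm_mul, norm_cpow_eq_rpow_re_of_pos hx,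
    norm_cpow_eq_rpow_re_of_pos hy]

lemma norm_eulerZeta2_term_le (s₁ s₂ : ℂ) {t : ℝ} (ht₀ : 0 ≤ t) (ht : t ≤ s₂.re) (n : ℕ × ℕ) :
    ‖1 / (((n.1 : ℂ) + 1) ^ s₁ * (((n.1 : ℂ) + 1) + ((n.2 : ℂ) + 1)) ^ s₂)‖ ≤
      ((n.1 : ℝ) + 1) ^ (-(s₁.re + s₂.re - t)) * ((n.2 : ℝ) + 1) ^ (-t) := by
  have ha : (0 : ℝ) < n.1 + 1 := by positivity
  have hc : (0 : ℝ) < n.2 + 1 := by positivity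
  have hnorm := norm_one_div_cpow_mul_cpow ha (add_pos ha hc) s₁ s₂
  push_cast at hnorm
  rw [hnorm, Real.rpow_neg ha.le, Real.rpow_neg hc.le, ← mul_inv, ← one_div]
  exact one_div_le_one_div_of_le (by positivity)
    (rpow_add_sub_mul_rpow_le_rpow_mul_add_rpow s₁.re ha hc.le ht₀ ht)

/-- The double series defining the Euler double zeta-function converges absolutely
whenever `Re s₁ + Re s₂ > 2` and `Re s₂ > 1`. -/
theorem eulerZeta2_summable (s₁ s₂ : ℂ) (h₁ : 2 < s₁.re + s₂.re) (h₂ : 1 < s₂.re) :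
    Summable (fun n : ℕ × ℕ =>
      ‖1 / (((n.1 : ℂ) + 1) ^ s₁ * (((n.1 : ℂ) + 1) + ((n.2 : ℂ) + 1)) ^ s₂)‖) := by
  obtain ⟨t, ht₁, ht⟩ := exists_between (lt_min h₂ (by linarith : 1 < s₁.re + s₂.re - 1))
  have hp : 1 < s₁.re + s₂.re - t := by linarith [min_le_right s₂.re (s₁.re + s₂.re - 1)]
  have hprod := (summable_nat_add_one_rpow_neg hp).mul_of_nonneg
    (summable_nat_add_one_rpow_neg ht₁) (fun _ => by positivity) (fun _ => by positivity)
  exact hprod.of_nonneg_of_le (fun _ => norm_nonneg _)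
    (norm_eulerZeta2_term_le s₁ s₂ (by linarith) (ht.le.trans (min_le_left _ _)))
end

section
/- For every complex s with Re s > 1, ζ₂(s,s) = 2^{-s}(1 + Z(s)), where Z(s) = 2^{-s} + 2Z₁(s) + Z₂(s) + Z₃(s) + Z₄(s). -/
open Complex

/-- `Z₁(s) = ∑_{k ≥ 3} k^{-s}`, indexed by `k = m + 3`, `m : ℕ`. -/
noncomputable def Z₁ (s : ℂ) : ℂ := ∑' m : ℕ, 1 / (((m : ℂ) + 3) ^ s)

/-- `Z₂(s) = ∑_{k ≥ 1} (k + 1/2)^{-s}`, indexed by `k = m + 1`, `m : ℕ`. -/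
noncomputable def Z₂ (s : ℂ) : ℂ := ∑' m : ℕ, 1 / ((((m : ℂ) + 1) + 1 / 2) ^ s)

/-- `Z₃(s) = ∑_{k ≥ 2} k^{-s} ∑_{n ≥ 1} (2k+n)^{-s}`, with `k = m + 2`, `n = j + 1`. -/
noncomputable def Z₃ (s : ℂ) : ℂ :=
  ∑' m : ℕ, (1 / (((m : ℂ) + 2) ^ s)) *
    ∑' j : ℕ, 1 / ((2 * ((m : ℂ) + 2) + ((j : ℂ) + 1)) ^ s)

/-- `Z₄(s) = ∑_{k ≥ 1} (k+1/2)^{-s} ∑_{n ≥ 1} (2k+1+n)^{-s}`, with `k = m + 1`, `n = j + 1`. -/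
noncomputable def Z₄ (s : ℂ) : ℂ :=
  ∑' m : ℕ, (1 / ((((m : ℂ) + 1) + 1 / 2) ^ s)) *
    ∑' j : ℕ, 1 / ((2 * ((m : ℂ) + 1) + 1 + ((j : ℂ) + 1)) ^ s)

/-- `Z(s) = 2^{-s} + 2Z₁(s) + Z₂(s) + Z₃(s) + Z₄(s)`. -/
noncomputable def Z (s : ℂ) : ℂ := 1 / (2 : ℂ) ^ s + 2 * Z₁ s + Z₂ s + Z₃ s + Z₄ s

/-!
Write `ζ₂(s,s) = ∑_{k ≥ 1} k^{-s} T(k)` with `T(k) = ∑_{n ≥ 1} (k+n)^{-s}`, and split the outer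
sum into `k = 1`, `k = 2`, odd `k ≥ 3` and even `k ≥ 4`; split `T(1) = ∑_{m ≥ 2} m^{-s}` further
by the parity of `m`. In each piece the base is `2x` for some positive real `x`, and
`(2x)^{-s} = 2^{-s} x^{-s}` pulls out the common factor: the even part of `T(1)` gives
`2^{-s} (1 + 2^{-s} + Z₁)`, its odd part `2^{-s} Z₂`, `k = 2` gives `2^{-s} Z₁`,
`k = 2m + 3 = 2(m + 3/2)` gives `2^{-s} Z₄` and `k = 2m + 4` gives `2^{-s} Z₃`.
-/

section SplitSum

variable {α : Type*} [AddCommGroup α] [UniformSpace α] [IsUniformAddGroup α] [CompleteSpace α]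
  [T2Space α]

theorem Summable.tsum_eq_zero_add_one_add_even_add_odd {f : ℕ → α} (hf : Summable f) :
    ∑' k, f k = f 0 + f 1 + ∑' m, f (2 * m + 2) + ∑' m, f (2 * m + 3) := by
  have heven : Summable fun m => f (2 * m + 2) :=
    hf.comp_injective fun a b h => by omega
  have hodd : Summable fun m => f (2 * m + 3) :=
    hf.comp_injective fun a b h => by omega
  rw [hf.tsum_eq_zero_add, ((summable_nat_add_iff 1).2 hf).tsum_eq_zero_add,
    ← tsum_even_add_odd (f := fun k => f (k + 1 + 1)) heven hodd]
  simp only [add_assoc]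
  rfl

end SplitSum

namespace Complex

theorem ofReal_mul_cpow {r : ℝ} (hr : 0 ≤ r) (z s : ℂ) :
    ((r : ℂ) * z) ^ s = (r : ℂ) ^ s * z ^ s := by
  rcases eq_or_ne s 0 with rfl | hs
  · simp
  rcases hr.eq_or_lt with rfl | hr
  · simp [zero_cpow hs]
  rcases eq_or_ne z 0 with rfl | hz
  · simp [zero_cpow hs]
  have hr' : (r : ℂ) ≠ 0 := ofReal_ne_zero.2 hr.ne'
  rw [cpow_def_of_ne_zero (mul_ne_zero hr' hz), log_ofReal_mul hr hz, ofReal_log hr.le, add_mul,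
    exp_add, ← cpow_def_of_ne_zero hr', ← cpow_def_of_ne_zero hz]

theorem one_div_two_mul_cpow (z s : ℂ) : 1 / (2 * z) ^ s = 1 / 2 ^ s * (1 / z ^ s) := by
  have h := ofReal_mul_cpow zero_le_two z s
  push_cast at h
  rw [h, one_div_mul_one_div]

theorem norm_one_div_natCast_cpow_le {m n : ℕ} (hm : 0 < m) (hmn : m ≤ n) {s : ℂ}
    (hs : 0 ≤ s.re) : ‖1 / (n : ℂ) ^ s‖ ≤ ‖1 / (m : ℂ) ^ s‖ := by
  rw [norm_div, norm_div, norm_one, norm_natCast_cpow_of_pos hm,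
    norm_natCast_cpow_of_pos (hm.trans_le hmn)]
  gcongr

theorem summable_one_div_natCast_add_cpow {s : ℂ} (hs : 1 < s.re) (k : ℕ) :
    Summable fun n : ℕ => 1 / ((n : ℂ) + k) ^ s := by
  simpa using (summable_nat_add_iff k).2 (summable_one_div_nat_cpow.2 hs)

end Complex

section EulerZeta2

variable {s₁ s₂ : ℂ}

theorem summable_eulerZeta2_term (h₁ : 1 < s₁.re) (h₂ : 1 < s₂.re) :
    Summable fun n : ℕ × ℕ =>
      1 / (((n.1 : ℂ) + 1) ^ s₁ * (((n.1 : ℂ) + 1) + ((n.2 : ℂ) + 1)) ^ s₂) := by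
  have hnorm (s : ℂ) (hs : 1 < s.re) : Summable fun n : ℕ => ‖1 / ((n : ℂ) + 1) ^ s‖ := by
    simpa using (summable_one_div_natCast_add_cpow hs 1).norm
  refine (hnorm s₁ h₁).mul_norm (hnorm s₂ h₂) |>.of_norm_bounded fun ⟨k, n⟩ => ?_
  have hsum : ((k : ℂ) + 1) + ((n : ℂ) + 1) = ((k + n + 2 : ℕ) : ℂ) := by push_cast; ring
  have hle := norm_one_div_natCast_cpow_le (m := n + 1) (n := k + n + 2) (by omega) (by omega)
    (zero_le_one.trans h₂.le)
  push_cast at hle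
  rw [← one_div_mul_one_div, norm_mul, norm_mul, hsum]
  push_cast
  exact mul_le_mul_of_nonneg_left hle (norm_nonneg _)

noncomputable def eulerZeta2Row (s₁ s₂ : ℂ) (k : ℕ) : ℂ :=
  1 / ((k : ℂ) + 1) ^ s₁ * ∑' n : ℕ, 1 / (((k : ℂ) + 1) + ((n : ℂ) + 1)) ^ s₂

theorem eulerZeta2Row_eq_tsum (k : ℕ) :
    eulerZeta2Row s₁ s₂ k =
      ∑' n : ℕ, 1 / (((k : ℂ) + 1) ^ s₁ * (((k : ℂ) + 1) + ((n : ℂ) + 1)) ^ s₂) := by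
  simp_rw [eulerZeta2Row, ← tsum_mul_left, one_div_mul_one_div]

theorem summable_eulerZeta2Row (h₁ : 1 < s₁.re) (h₂ : 1 < s₂.re) :
    Summable (eulerZeta2Row s₁ s₂) := by
  simpa only [← eulerZeta2Row_eq_tsum] using (summable_eulerZeta2_term h₁ h₂).prod

theorem eulerZeta2_eq_tsum_eulerZeta2Row (h₁ : 1 < s₁.re) (h₂ : 1 < s₂.re) :
    eulerZeta2 s₁ s₂ = ∑' k, eulerZeta2Row s₁ s₂ k := by
  simp only [eulerZeta2, eulerZeta2Row_eq_tsum, (summable_eulerZeta2_term h₁ h₂).tsum_prod]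

end EulerZeta2

section DiagonalRows

variable {s : ℂ}

theorem tsum_one_div_natCast_add_one_cpow (hs : 1 < s.re) :
    ∑' n : ℕ, 1 / ((n : ℂ) + 1) ^ s = 1 + 1 / 2 ^ s + Z₁ s := by
  have hsum : Summable fun n : ℕ => 1 / ((n : ℂ) + 1) ^ s := by
    simpa using summable_one_div_natCast_add_cpow hs 1
  rw [← hsum.sum_add_tsum_nat_add 2, Z₁]
  norm_num [Finset.sum_range_succ, add_assoc, one_add_one_eq_two]

theorem eulerZeta2Row_zero (hs : 1 < s.re) :
    eulerZeta2Row s s 0 = 1 / 2 ^ s * (1 + 1 / 2 ^ s + Z₁ s + Z₂ s) := by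
  have hrow : eulerZeta2Row s s 0 = ∑' n : ℕ, 1 / ((n : ℂ) + 2) ^ s := by
    simp only [eulerZeta2Row, Nat.cast_zero, zero_add, one_cpow, div_one, one_mul]
    exact tsum_congr fun n => by ring_nf
  have hsum : Summable fun n : ℕ => 1 / ((n : ℂ) + 2) ^ s := by
    simpa using summable_one_div_natCast_add_cpow hs 2
  have heven :
      ∑' j : ℕ, 1 / (((2 * j : ℕ) : ℂ) + 2) ^ s = 1 / 2 ^ s * (1 + 1 / 2 ^ s + Z₁ s) := by
    rw [← tsum_one_div_natCast_add_one_cpow hs, ← tsum_mul_left]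
    refine tsum_congr fun j => ?_
    rw [show ((2 * j : ℕ) : ℂ) + 2 = 2 * ((j : ℂ) + 1) by push_cast; ring, one_div_two_mul_cpow]
  have hodd : ∑' j : ℕ, 1 / (((2 * j + 1 : ℕ) : ℂ) + 2) ^ s = 1 / 2 ^ s * Z₂ s := by
    rw [Z₂, ← tsum_mul_left]
    refine tsum_congr fun j => ?_
    rw [show ((2 * j + 1 : ℕ) : ℂ) + 2 = 2 * ((j : ℂ) + 1 + 1 / 2) by push_cast; ring,
      one_div_two_mul_cpow]
  have hsplit := tsum_even_add_odd (f := fun n : ℕ => 1 / ((n : ℂ) + 2) ^ s)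
    (hsum.comp_injective (i := fun j => 2 * j) fun a b h => by dsimp only at h; omega)
    (hsum.comp_injective (i := fun j => 2 * j + 1) fun a b h => by dsimp only at h; omega)
  beta_reduce at hsplit
  rw [hrow, ← hsplit, heven, hodd]
  ring

theorem eulerZeta2Row_one : eulerZeta2Row s s 1 = 1 / 2 ^ s * Z₁ s := by
  rw [eulerZeta2Row, Z₁, Nat.cast_one, one_add_one_eq_two]
  congr 1
  exact tsum_congr fun n => by ring_nf

theorem tsum_eulerZeta2Row_two_mul_add_two :
    ∑' m : ℕ, eulerZeta2Row s s (2 * m + 2) = 1 / 2 ^ s * Z₄ s := by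
  rw [Z₄, ← tsum_mul_left]
  refine tsum_congr fun m => ?_
  have hk : ((2 * m + 2 : ℕ) : ℂ) + 1 = 2 * ((m : ℂ) + 1 + 1 / 2) := by push_cast; ring
  have hn (j : ℕ) :
      2 * ((m : ℂ) + 1 + 1 / 2) + ((j : ℂ) + 1) = 2 * ((m : ℂ) + 1) + 1 + ((j : ℂ) + 1) := by
    ring
  rw [eulerZeta2Row, hk, one_div_two_mul_cpow, mul_assoc]
  simp_rw [hn]

theorem tsum_eulerZeta2Row_two_mul_add_three :
    ∑' m : ℕ, eulerZeta2Row s s (2 * m + 3) = 1 / 2 ^ s * Z₃ s := by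
  rw [Z₃, ← tsum_mul_left]
  refine tsum_congr fun m => ?_
  have hk : ((2 * m + 3 : ℕ) : ℂ) + 1 = 2 * ((m : ℂ) + 2) := by push_cast; ring
  rw [eulerZeta2Row, hk, one_div_two_mul_cpow, mul_assoc]

end DiagonalRows

/-- For `Re s > 1`, `ζ₂(s,s) = 2^{-s} (1 + Z(s))`. -/
theorem eulerZeta2_diag_factorization (s : ℂ) (hs : 1 < s.re) :
    eulerZeta2 s s = (1 / (2 : ℂ) ^ s) * (1 + Z s) := by
  rw [eulerZeta2_eq_tsum_eulerZeta2Row hs hs,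
    (summable_eulerZeta2Row hs hs).tsum_eq_zero_add_one_add_even_add_odd, eulerZeta2Row_zero hs,
    eulerZeta2Row_one, tsum_eulerZeta2Row_two_mul_add_two, tsum_eulerZeta2Row_two_mul_add_three, Z]
  ring
end

section
/- There exists a real number σ₀ with 1/2 < σ₀ < 1 such that ζ(σ₀)² = ζ(2σ₀); equivalently, the meromorphic continuation of ζ₂(s,s), given by (1/2){ζ(s)² − ζ(2s)}, has at least one zero on the real interval (1/2, 1). -/
/-!
Write `ζ(s) = ζ₁(s) / (s - 1)` with `ζ₁` entire, real on the real axis and `ζ₁(1) = 1`.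
Clearing the poles of `ζ(s)² - ζ(2s)` at `1` and `1/2` gives a continuous function, real on the
real axis, equal to `-1/4` at `1/2` and to `1` at `1`; the intermediate value theorem gives a zero
in between, and the cleared factors do not vanish there.
-/

open Complex ComplexConjugate

lemma riemannZeta₀_conj (s : ℂ) : riemannZeta₀ (conj s) = conj (riemannZeta₀ s) := by
  rcases eq_or_ne s 1 with rfl | hs
  · simp [riemannZeta₀]
  · have hs' : conj s ≠ 1 := (map_ne_one_iff _ (starRingEnd ℂ).injective).mpr hs
    simp [riemannZeta₀, hs, hs']

lemma riemannZeta₁_conj (s : ℂ) : riemannZeta₁ (conj s) = conj (riemannZeta₁ s) := by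
  simp [riemannZeta₁, riemannZeta₀_conj]

/-- `(s - 1)² (2s - 1) (ζ(s)² - ζ(2s))`, with the poles at `s = 1` and `s = 1/2` cleared. -/
noncomputable def diagZetaCleared (s : ℂ) : ℂ :=
  (2 * s - 1) * riemannZeta₁ s ^ 2 - (s - 1) ^ 2 * riemannZeta₁ (2 * s)

lemma continuous_diagZetaCleared : Continuous diagZetaCleared := by
  have hζ₁ := differentiable_riemannZeta₁.continuous
  unfold diagZetaCleared
  fun_prop

lemma diagZetaCleared_conj (s : ℂ) : diagZetaCleared (conj s) = conj (diagZetaCleared s) := by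
  simp only [diagZetaCleared, map_sub, map_mul, map_pow, map_ofNat, map_one,
    ← riemannZeta₁_conj]

lemma diagZetaCleared_eq {s : ℂ} (hs : s ≠ 1) (hs' : 2 * s ≠ 1) :
    diagZetaCleared s =
      (s - 1) ^ 2 * (2 * s - 1) * (riemannZeta s ^ 2 - riemannZeta (2 * s)) := by
  have h1 : s - 1 ≠ 0 := sub_ne_zero.mpr hs
  have h2 : 2 * s - 1 ≠ 0 := sub_ne_zero.mpr hs'
  rw [riemannZeta_eq_inv_sub_mul hs, riemannZeta_eq_inv_sub_mul hs', diagZetaCleared]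
  field_simp

lemma diagZetaCleared_half : diagZetaCleared (1 / 2) = -1 / 4 := by
  norm_num [diagZetaCleared]

lemma diagZetaCleared_one : diagZetaCleared 1 = 1 := by
  norm_num [diagZetaCleared]

lemma exists_diagZetaCleared_eq_zero :
    ∃ σ ∈ Set.Ioo (1 / 2 : ℝ) 1, diagZetaCleared σ = 0 := by
  have hcont : ContinuousOn (fun σ : ℝ => (diagZetaCleared σ).re) (Set.Icc (1 / 2) 1) :=
    (continuous_re.comp (continuous_diagZetaCleared.comp continuous_ofReal)).continuousOn
  have hzero : (0 : ℝ) ∈ Set.Ioo (diagZetaCleared ((1 / 2 : ℝ) : ℂ)).re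
      (diagZetaCleared ((1 : ℝ) : ℂ)).re := by
    norm_num [diagZetaCleared_half, diagZetaCleared_one]
  obtain ⟨σ, hσ, hre⟩ := intermediate_value_Ioo (by norm_num) hcont hzero
  refine ⟨σ, hσ, Complex.ext hre ?_⟩
  have hreal := diagZetaCleared_conj σ
  rw [conj_ofReal] at hreal
  exact conj_eq_iff_im.mp hreal.symm

/-- The meromorphic continuation `(1/2){ζ(s)² − ζ(2s)}` of `ζ₂(s,s)` has at least one zero on
the real interval `(1/2, 1)`: there is a real `σ₀` with `1/2 < σ₀ < 1` and `ζ(σ₀)² = ζ(2σ₀)`. -/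
theorem eulerZeta2_diag_real_zero :
    ∃ σ₀ : ℝ, 1 / 2 < σ₀ ∧ σ₀ < 1 ∧
      riemannZeta (σ₀ : ℂ) ^ 2 = riemannZeta (2 * (σ₀ : ℂ)) := by
  obtain ⟨σ, ⟨hσ₁, hσ₂⟩, hzero⟩ := exists_diagZetaCleared_eq_zero
  have hs : (σ : ℂ) ≠ 1 := by exact_mod_cast hσ₂.ne
  have hs' : 2 * (σ : ℂ) ≠ 1 := by exact_mod_cast (by linarith : 2 * σ ≠ 1)
  rw [diagZetaCleared_eq hs hs'] at hzero
  refine ⟨σ, hσ₁, hσ₂, sub_eq_zero.mp ?_⟩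
  simpa [sub_eq_zero, hs, hs'] using hzero
end
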